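/- Let V be a real normed space, E : V → ℝ twice continuously Fréchet differentiable, u ∈ V, and β : (−ε,ε) → (0,∞) a C¹ function with β(0) = 1 such that E'[β(s)(u+sv)](u+sv) = 0 for all |s| < ε, and suppose E[u] ≤ E[β(s)(u+sv)] for all |s| < ε. If additionally E'[u] = 0 and E''[u](u,v) = 0, then E''[u](v,v) ≥ 0. -/

import Mathlib

/-- Nonnegativity of the second variation along a Nehari-normalized segment: if `E ∈ C²`,
`β` is `C¹` with `β 0 = 1` and positive values, `E'[β(s)(u+sv)](u+sv) = 0` and
`E[u] ≤ E[β(s)(u+sv)]` for all `|s| < ε`, and moreover `E'[u] = 0` and `E''[u](u,v) = 0`,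
then `E''[u](v,v) ≥ 0`. -/
theorem stmt17 {V : Type*} [NormedAddCommGroup V] [NormedSpace ℝ V]
    (E : V → ℝ) (hE : ContDiff ℝ 2 E) (u v : V) (ε : ℝ) (hε : 0 < ε)
    (β : ℝ → ℝ) (hβ : ContDiffOn ℝ 1 β (Set.Ioo (-ε) ε)) (hβ0 : β 0 = 1)
    (hβpos : ∀ s ∈ Set.Ioo (-ε) ε, 0 < β s)
    (hconstr : ∀ s ∈ Set.Ioo (-ε) ε, fderiv ℝ E (β s • (u + s • v)) (u + s • v) = 0)
    (hmin : ∀ s ∈ Set.Ioo (-ε) ε, E u ≤ E (β s • (u + s • v)))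
    (hcrit : fderiv ℝ E u = 0)
    (horth : fderiv ℝ (fderiv ℝ E) u u v = 0) :
    0 ≤ fderiv ℝ (fderiv ℝ E) u v v := by
  by_contra hneg
  push_neg at hneg
  set D := fderiv ℝ (fderiv ℝ E) u with hD
  set γ : ℝ → V := fun s => β s • (u + s • v) with hγdef
  set h : ℝ → ℝ := fun s => fderiv ℝ E (γ s) v with hhdef
  have hEdiff : Differentiable ℝ E := hE.differentiable (by norm_num)
  have hE'cd : ContDiff ℝ 1 (fderiv ℝ E) := hE.fderiv_right (by norm_num)
  have hE'diff : Differentiable ℝ (fderiv ℝ E) := hE'cd.differentiable one_ne_zero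
  have h0mem : (0:ℝ) ∈ Set.Ioo (-ε) ε := by constructor <;> linarith
  have hβd : ∀ s ∈ Set.Ioo (-ε) ε, HasDerivAt β (deriv β s) s := fun s hs =>
    (((hβ.differentiableOn one_ne_zero) s hs).differentiableAt
      (isOpen_Ioo.mem_nhds hs)).hasDerivAt
  have hγd : ∀ s ∈ Set.Ioo (-ε) ε,
      HasDerivAt γ (β s • v + deriv β s • (u + s • v)) s := by
    intro s hs
    have h1 : HasDerivAt (fun t : ℝ => u + t • v) v s := by
      simpa using ((hasDerivAt_id s).smul_const v).const_add u
    have h2 : HasDerivAt (fun t => β t • (u + t • v)) (β s • v + deriv β s • (u + s • v)) s :=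
      (hβd s hs).smul h1
    simpa [hγdef, smul_add] using h2
  have hgd : ∀ s ∈ Set.Ioo (-ε) ε,
      HasDerivAt (fun t => E (γ t)) (β s * h s) s := by
    intro s hs
    have hc := ((hEdiff (γ s)).hasFDerivAt).comp_hasDerivAt s (hγd s hs)
    have heq : fderiv ℝ E (γ s) (β s • v + deriv β s • (u + s • v)) = β s * h s := by
      rw [map_add, map_smul, map_smul, hconstr s hs]
      simp [hhdef]
    rw [heq] at hc
    exact hc
  have hγ0 : γ 0 = u := by simp [hγdef, hβ0]
  have hh0 : h 0 = 0 := by simp [hhdef, hγ0, hcrit]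
  have hhd : HasDerivAt h (D v v) 0 := by
    have hγd0 : HasDerivAt γ ((1:ℝ) • v + deriv β 0 • u) 0 := by
      have := hγd 0 h0mem
      simpa [hβ0] using this
    have hF : HasFDerivAt (fderiv ℝ E) D (γ 0) := by
      rw [hγ0]; exact (hE'diff u).hasFDerivAt
    have hcomp := hF.comp_hasDerivAt 0 hγd0
    have happ := (ContinuousLinearMap.apply ℝ ℝ v).hasFDerivAt.comp_hasDerivAt 0 hcomp
    have he : (ContinuousLinearMap.apply ℝ ℝ v) (D ((1:ℝ) • v + deriv β 0 • u)) = D v v := by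
      simp [map_add, map_smul, horth]
    rw [he] at happ
    exact happ
  -- h is negative on a right neighborhood of 0
  have hslope : Filter.Tendsto (fun s => s⁻¹ * h s) (nhdsWithin 0 {(0:ℝ)}ᶜ) (nhds (D v v)) := by
    have := hasDerivAt_iff_tendsto_slope.mp hhd
    simpa [slope_fun_def, hh0] using this
  have hslope' : Filter.Tendsto (fun s => s⁻¹ * h s) (nhdsWithin 0 (Set.Ioi 0)) (nhds (D v v)) :=
    hslope.mono_left (nhdsWithin_mono 0 (fun x hx => ne_of_gt hx))
  have hev : ∀ᶠ s in nhdsWithin 0 (Set.Ioi 0), s⁻¹ * h s < 0 :=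
    hslope'.eventually_lt_const hneg
  obtain ⟨δ, hδpos, hδ⟩ := (mem_nhdsGT_iff_exists_Ioo_subset).mp hev
  have hδpos' : (0:ℝ) < δ := hδpos
  -- choose t
  set t := min δ ε / 2 with htdef
  have htpos : 0 < t := by positivity
  have htδ : t < δ := by
    have : min δ ε ≤ δ := min_le_left _ _
    simp only [htdef]; linarith
  have htε : t < ε := by
    have : min δ ε ≤ ε := min_le_right _ _
    simp only [htdef]; linarith
  have hsub : Set.Icc (0:ℝ) t ⊆ Set.Ioo (-ε) ε := fun x hx =>
    ⟨by linarith [hx.1], by linarith [hx.2]⟩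
  have hneg' : ∀ x ∈ Set.Ioo (0:ℝ) t, h x < 0 := by
    intro x hx
    have hx' : x ∈ Set.Ioo (0:ℝ) δ := ⟨hx.1, lt_trans hx.2 htδ⟩
    have hm := hδ hx'
    simp only [Set.mem_setOf_eq] at hm
    have hxpos : 0 < x := hx.1
    rcases mul_neg_iff.mp hm with ⟨h1, h2⟩ | ⟨h1, h2⟩
    · exact h2
    · exact absurd (inv_pos.mpr hxpos) (not_lt.mpr h1.le)
  have hanti : StrictAntiOn (fun s => E (γ s)) (Set.Icc 0 t) := by
    apply strictAntiOn_of_deriv_neg (convex_Icc 0 t)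
    · exact ContinuousOn.mono (fun x hx => ((hgd x (hsub hx)).continuousAt.continuousWithinAt)) le_rfl
    · intro x hx
      rw [interior_Icc] at hx
      have hxm : x ∈ Set.Ioo (-ε) ε := hsub ⟨le_of_lt hx.1, le_of_lt hx.2⟩
      rw [(hgd x hxm).deriv]
      exact mul_neg_of_pos_of_neg (hβpos x hxm) (hneg' x hx)
  have hlt : E (γ t) < E (γ 0) := hanti (Set.left_mem_Icc.mpr htpos.le)
      (Set.right_mem_Icc.mpr htpos.le) htpos
  rw [hγ0] at hlt
  exact absurd (hmin t (hsub (Set.right_mem_Icc.mpr htpos.le))) (not_le.mpr hlt)
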